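/- arXiv:2502.03755 — 2 statements merged into one kernel-verified Lean document; each statement's English description precedes it below -/
import Mathlib

section
/- Let (S, Σ, μ) be a measure space, α ∈ (0,1), and let p0, p1 : S → ℝ be measurable probability densities with respect to μ (p0 ≥ 0, p1 ≥ 0, ∫ p0 dμ = ∫ p1 dμ = 1), with p1 > 0 μ-almost everywhere, and suppose the function p0·p1/(α·p0 + (1−α)·p1) is μ-integrable. Let f_α(t) = (1/(4α(1−α)))·[(αt − (1−α))²/(αt + (1−α)) − (2α−1)²]. Then ∫ f_α(p0/p1)·p1 dμ = 1 − ∫ p0·p1/(α·p0 + (1−α)·p1) dμ. -/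
open MeasureTheory

/-- For probability densities `p0, p1` w.r.t. μ with `p1 > 0` a.e. and integrable
affinity integrand, the Henze–Penrose f-divergence equals one minus the affinity:
`∫ f_α(p0/p1)·p1 dμ = 1 − ∫ p0·p1/(α·p0 + (1−α)·p1) dμ`. -/
theorem henze_penrose_divergence_eq_one_sub_affinity
    {S : Type*} [MeasurableSpace S] (μ : Measure S)
    (α : ℝ) (hα : α ∈ Set.Ioo (0 : ℝ) 1)
    (p0 p1 : S → ℝ) (hm0 : Measurable p0) (hm1 : Measurable p1)
    (h0 : ∀ s, 0 ≤ p0 s) (h1 : ∀ s, 0 ≤ p1 s)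
    (hi0 : ∫ s, p0 s ∂μ = 1) (hi1 : ∫ s, p1 s ∂μ = 1)
    (hpos : ∀ᵐ s ∂μ, 0 < p1 s)
    (hint : Integrable (fun s => p0 s * p1 s / (α * p0 s + (1 - α) * p1 s)) μ)
    (f : ℝ → ℝ)
    (hf : f = fun t : ℝ => (1 / (4 * α * (1 - α))) *
      ((α * t - (1 - α)) ^ 2 / (α * t + (1 - α)) - (2 * α - 1) ^ 2)) :
    ∫ s, f (p0 s / p1 s) * p1 s ∂μ
      = 1 - ∫ s, p0 s * p1 s / (α * p0 s + (1 - α) * p1 s) ∂μ := by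
  obtain ⟨hα0, hα1⟩ := hα
  have hα1' : 0 < 1 - α := by linarith
  have hInt0 : Integrable p0 μ := by
    by_contra h
    rw [integral_undef h] at hi0; norm_num at hi0
  have hInt1 : Integrable p1 μ := by
    by_contra h
    rw [integral_undef h] at hi1; norm_num at hi1
  have hcongr : ∀ᵐ s ∂μ, f (p0 s / p1 s) * p1 s
      = (p0 s - p1 s) / (4 * (1 - α)) + p1 s
        - p0 s * p1 s / (α * p0 s + (1 - α) * p1 s) := by
    filter_upwards [hpos] with s hs
    have hp1 : p1 s ≠ 0 := ne_of_gt hs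
    have hd : α * p0 s + (1 - α) * p1 s > 0 := by
      have := mul_nonneg (le_of_lt hα0) (h0 s)
      nlinarith [mul_pos hα1' hs]
    have hd2 : α * (p0 s / p1 s) + (1 - α) > 0 := by
      have := div_nonneg (h0 s) (h1 s)
      nlinarith [mul_nonneg (le_of_lt hα0) this]
    rw [hf]
    field_simp
    ring
  rw [integral_congr_ae hcongr]
  have hIsub : Integrable (fun s => (p0 s - p1 s) / (4 * (1 - α))) μ :=
    (hInt0.sub hInt1).div_const _
  have hI : Integrable (fun s => (p0 s - p1 s) / (4 * (1 - α)) + p1 s) μ := hIsub.add hInt1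
  rw [integral_sub hI hint, integral_add hIsub hInt1,
    integral_div, integral_sub hInt0 hInt1, hi0, hi1]
  ring
end

section
/- Let (S, Σ, μ) be a measure space, α ∈ (0,1), and let p0, p1 : S → ℝ be measurable probability densities with respect to μ (p0 ≥ 0, p1 ≥ 0, ∫ p0 dμ = ∫ p1 dμ = 1) such that g = p0·p1/(α·p0 + (1−α)·p1) (set to 0 where the denominator vanishes) is μ-integrable. If ∫ g dμ = 1, i.e., the Henze–Penrose f-divergence D_f(p0‖p1) = 1 − ∫ g dμ equals 0, then p0 = p1 μ-almost everywhere. -/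
open MeasureTheory

/-- For probability densities `p0, p1` w.r.t. μ with integrable affinity
integrand `g` (set to 0 where the denominator vanishes): if `∫ g dμ = 1`,
i.e. the Henze–Penrose f-divergence `1 − ∫ g dμ` is 0, then `p0 = p1` μ-a.e. -/
theorem henze_penrose_divergence_eq_zero_iff
    {S : Type*} [MeasurableSpace S] (μ : Measure S)
    (α : ℝ) (hα : α ∈ Set.Ioo (0 : ℝ) 1)
    (p0 p1 : S → ℝ) (hm0 : Measurable p0) (hm1 : Measurable p1)
    (h0 : ∀ s, 0 ≤ p0 s) (h1 : ∀ s, 0 ≤ p1 s)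
    (hi0 : ∫ s, p0 s ∂μ = 1) (hi1 : ∫ s, p1 s ∂μ = 1)
    (g : S → ℝ)
    (hg : g = fun s => if α * p0 s + (1 - α) * p1 s = 0 then 0
      else p0 s * p1 s / (α * p0 s + (1 - α) * p1 s))
    (hint : Integrable g μ)
    (heq : ∫ s, g s ∂μ = 1) :
    p0 =ᵐ[μ] p1 := by
  obtain ⟨hα0, hα1⟩ := hα
  have hI0 : Integrable p0 μ := by
    by_contra h
    rw [integral_undef h] at hi0
    norm_num at hi0
  have hI1 : Integrable p1 μ := by
    by_contra h
    rw [integral_undef h] at hi1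
    norm_num at hi1
  set F : S → ℝ := fun s => (1 - α) * p0 s + α * p1 s - g s with hF
  have key : ∀ s, 0 ≤ F s ∧ (F s = 0 → p0 s = p1 s) := by
    intro s
    simp only [hF, hg]
    by_cases hd : α * p0 s + (1 - α) * p1 s = 0
    · have hp0 : p0 s = 0 := by nlinarith [h0 s, h1 s]
      have hp1 : p1 s = 0 := by nlinarith [h0 s, h1 s]
      simp [hd, hp0, hp1]
    · have hdpos : 0 < α * p0 s + (1 - α) * p1 s := by
        rcases lt_or_eq_of_le (by nlinarith [h0 s, h1 s] :
          (0:ℝ) ≤ α * p0 s + (1 - α) * p1 s) with h | h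
        · exact h
        · exact absurd h.symm hd
      simp only [if_neg hd]
      constructor
      · rw [sub_nonneg, div_le_iff₀ hdpos]
        nlinarith [mul_nonneg (mul_pos hα0 (by linarith : (0:ℝ) < 1 - α)).le
          (sq_nonneg (p0 s - p1 s))]
      · intro hz
        have hthis : ((1 - α) * p0 s + α * p1 s) * (α * p0 s + (1 - α) * p1 s)
            = p0 s * p1 s := by
          field_simp at hz
          linarith [hz]
        have h2 : α * (1 - α) * (p0 s - p1 s) ^ 2 = 0 := by linear_combination hthis
        have h3 : (p0 s - p1 s) ^ 2 = 0 := by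
          have hne : α * (1 - α) ≠ 0 := ne_of_gt (mul_pos hα0 (by linarith))
          exact (mul_eq_zero.mp h2).resolve_left hne
        have := pow_eq_zero_iff (n := 2) (by norm_num) |>.mp h3
        linarith
  have hFint : Integrable F μ := (((hI0.const_mul _).add (hI1.const_mul _)).sub hint)
  have hFnn : 0 ≤ᵐ[μ] F := Filter.Eventually.of_forall fun s => (key s).1
  have hFI : ∫ s, F s ∂μ = 0 := by
    simp only [hF]
    have hIsum : Integrable (fun s => (1 - α) * p0 s + α * p1 s) μ :=
      (hI0.const_mul _).add (hI1.const_mul _)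
    rw [integral_sub hIsum hint, integral_add (hI0.const_mul _) (hI1.const_mul _),
      integral_const_mul, integral_const_mul, hi0, hi1, heq]
    ring
  have hF0 : F =ᵐ[μ] 0 := (integral_eq_zero_iff_of_nonneg_ae hFnn hFint).mp hFI
  filter_upwards [hF0] with s hs
  exact (key s).2 hs
end
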